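/- Under Assumption 2, if a continuous function u : ℝⁿ → ℝ satisfies the relaxed constraints, then for every x₀ ∈ B(0, R) with u(x₀) < 1 and every perturbation input policy π, the trajectory satisfies φ_{x₀}^π(k) ∈ X for all k ∈ ℕ. -/

import Mathlib

open Metric Set Filter MeasureTheory

noncomputable section

abbrev St (n : ℕ) := EuclideanSpace ℝ (Fin n)

/-- Trajectory of the perturbed discrete-time system. -/
def traj {n m : ℕ} (f : St n → St m → St n) (x₀ : St n) (π : ℕ → St m) : ℕ → St n
  | 0 => x₀
  | k + 1 => f (traj f x₀ π k) (π k)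

/-- A perturbation input policy takes values in `D`. -/
def IsPolicy {m : ℕ} (D : Set (St m)) (π : ℕ → St m) : Prop := ∀ k, π k ∈ D

/-- Maximal robust region of attraction. -/
def RoA {n m : ℕ} (f : St n → St m → St n) (D : Set (St m)) (X : Set (St n)) : Set (St n) :=
  {x₀ | ∀ π, IsPolicy D π →
    (∀ k, traj f x₀ π k ∈ X) ∧ Tendsto (fun k => traj f x₀ π k) atTop (nhds 0)}

/-- `f` is a polynomial map in `(x, d)`. -/
def IsPolyMap2 {n m : ℕ} (f : St n → St m → St n) : Prop :=
  ∃ p : Fin n → MvPolynomial (Fin n ⊕ Fin m) ℝ,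
    ∀ x d i, f x d i = MvPolynomial.eval (Sum.elim x d) (p i)

/-- A real-valued polynomial function on the state space. -/
def IsPolyFun {n : ℕ} (g : St n → ℝ) : Prop :=
  ∃ p : MvPolynomial (Fin n) ℝ, ∀ x, g x = MvPolynomial.eval x p

/-- Assumption 1: uniform local exponential stability. -/
def Assumption1 {n m : ℕ} (f : St n → St m → St n) (D : Set (St m)) (X : Set (St n)) : Prop :=
  ∃ M r lam : ℝ, 0 < M ∧ 0 < r ∧ 0 < lam ∧ lam < 1 ∧ closedBall (0 : St n) r ⊆ X ∧
    ∀ x₀ ∈ closedBall (0 : St n) r, ∀ π, IsPolicy D π →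
      ∀ k, ‖traj f x₀ π k‖ ≤ lam ^ k * M * ‖x₀‖

/-- Maximal robust region of uniform attraction (with ball radius `ε`). -/
def R0 {n m : ℕ} (f : St n → St m → St n) (D : Set (St m)) (X : Set (St n)) (ε : ℝ) :
    Set (St n) :=
  {x₀ | (∃ δ > 0, ∀ π, IsPolicy D π → ∀ k, δ < infDist (traj f x₀ π k) Xᶜ) ∧
        (∃ K : ℕ, ∀ π, IsPolicy D π →
            ∃ k, 0 < k ∧ k ≤ K ∧ traj f x₀ π k ∈ closedBall (0 : St n) ε)}

/-- Extended-real logarithm with the convention `ln 0 = -∞`. -/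
def elog (t : ℝ) : EReal := if t = 0 then ⊥ else (Real.log t : EReal)

/-- The value function `V`. -/
def Vval {n m nX : ℕ} (f : St n → St m → St n) (D : Set (St m))
    (hX : Fin nX → St n → ℝ) (g : St n → ℝ) (x : St n) : EReal :=
  ⨆ π ∈ {π : ℕ → St m | IsPolicy D π}, ⨆ k : ℕ,
    ((∑ i ∈ Finset.range k, Real.log (g (traj f x π i) + 1) : ℝ) : EReal)
      - ⨅ j : Fin nX, elog (max (1 - hX j (traj f x π k)) 0)

/-- The Kruzhkov transformed value function `v = 1 - e^{-V}` (with `e^{-∞} = 0`). -/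
def vval {n m nX : ℕ} (f : St n → St m → St n) (D : Set (St m))
    (hX : Fin nX → St n → ℝ) (g : St n → ℝ) (x : St n) : ℝ :=
  if Vval f D hX g x = ⊤ then 1 else 1 - Real.exp (-(Vval f D hX g x).toReal)

/-- `w` is a (bounded continuous) solution of the Bellman equation. -/
def IsBellmanSolution {n m nX : ℕ} (f : St n → St m → St n) (D : Set (St m))
    (hX : Fin nX → St n → ℝ) (g : St n → ℝ) (w : St n → ℝ) : Prop :=
  (∀ x, min (sInf {y : ℝ | ∃ d ∈ D, y = w x - w (f x d) - g x * (1 - w x)})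
            (w x - 1 + ⨅ j : Fin nX, max (1 - hX j x) 0) = 0) ∧ w 0 = 0

/-! The sublevel set `{x | ‖x‖² ≤ R ∧ u x < 1}` lies in `X` by (ii), and by (i) and `Ω(X) ⊆ B(0, R)`
every step maps it into itself as long as the state is outside `X∞`. So a trajectory starting there
stays in it, hence in `X`, until it first enters `X∞`; from then on it stays in `X` because
`X∞` is a robust region of attraction. -/

section Trajectory

variable {n m : ℕ} {f : St n → St m → St n} {D : Set (St m)}

theorem traj_add (x₀ : St n) (π : ℕ → St m) (i j : ℕ) :
    traj f x₀ π (i + j) = traj f (traj f x₀ π i) (fun l => π (i + l)) j := by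
  induction j with
  | zero => rfl
  | succ j ih => exact congrArg (f · (π (i + j))) ih

theorem IsPolicy.shift {π : ℕ → St m} (hπ : IsPolicy D π) (i : ℕ) :
    IsPolicy D (fun l => π (i + l)) :=
  fun l => hπ (i + l)

theorem traj_mem_of_le_of_mem_roA {X : Set (St n)} {x₀ : St n} {π : ℕ → St m}
    (hπ : IsPolicy D π) {i k : ℕ} (hik : i ≤ k) (hi : traj f x₀ π i ∈ RoA f D X) :
    traj f x₀ π k ∈ X := by
  obtain ⟨j, rfl⟩ := Nat.exists_eq_add_of_le hik
  rw [traj_add]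
  exact (hi _ (hπ.shift i)).1 j

theorem traj_mem_of_forall_lt_notMem {S A : Set (St n)}
    (hS : ∀ x ∈ S \ A, ∀ d ∈ D, f x d ∈ S) {x₀ : St n} (hx₀ : x₀ ∈ S) {π : ℕ → St m}
    (hπ : IsPolicy D π) :
    ∀ k, (∀ i < k, traj f x₀ π i ∉ A) → traj f x₀ π k ∈ S
  | 0, _ => hx₀
  | k + 1, hA =>
    hS _ ⟨traj_mem_of_forall_lt_notMem hS hx₀ hπ k fun i hi => hA i (by omega),
      hA k k.lt_succ_self⟩ _ (hπ k)

theorem traj_mem_of_mapsTo_diff_roA {S A X : Set (St n)} (hSX : S ⊆ X) (hA : A ⊆ RoA f D X)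
    (hS : ∀ x ∈ S \ A, ∀ d ∈ D, f x d ∈ S) {x₀ : St n} (hx₀ : x₀ ∈ S) {π : ℕ → St m}
    (hπ : IsPolicy D π) (k : ℕ) :
    traj f x₀ π k ∈ X := by
  by_cases hhit : ∃ i ≤ k, traj f x₀ π i ∈ A
  · obtain ⟨i, hik, hi⟩ := hhit
    exact traj_mem_of_le_of_mem_roA hπ hik (hA hi)
  · push Not at hhit
    exact hSX (traj_mem_of_forall_lt_notMem hS hx₀ hπ k fun i hi => hhit i hi.le)

end Trajectory

theorem stmt3_general
    {n m : ℕ} (f : St n → St m → St n) (D : Set (St m)) (X : Set (St n))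
    (g : St n → ℝ) (hgnn : ∀ x, 0 ≤ g x) (R : ℝ)
    (hOmegaX : {y | ∃ x₀ ∈ X, ∃ d ∈ D, y = f x₀ d} ∪ X ⊆ {x : St n | ‖x‖ ^ 2 ≤ R})
    (Xinf : Set (St n)) (hXinfRoA : Xinf ⊆ RoA f D X) (u : St n → ℝ)
    (hu1 : ∀ x ∈ closure ({x : St n | ‖x‖ ^ 2 ≤ R} \ Xinf), ∀ d ∈ D,
      0 ≤ u x - u (f x d) - g x * (1 - u x))
    (hu2 : ∀ x ∈ {x : St n | ‖x‖ ^ 2 ≤ R} \ X, 0 ≤ u x - 1)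
    :
    ∀ x₀ : St n, ‖x₀‖ ^ 2 ≤ R → u x₀ < 1 → ∀ π, IsPolicy D π →
      ∀ k, traj f x₀ π k ∈ X := by
  intro x₀ hx₀R hx₀u π hπ
  have hsub : {x : St n | ‖x‖ ^ 2 ≤ R ∧ u x < 1} ⊆ X := fun x ⟨hxB, hxu⟩ => by
    by_contra hxX
    linarith [hu2 x ⟨hxB, hxX⟩]
  refine traj_mem_of_mapsTo_diff_roA hsub hXinfRoA ?_ ⟨hx₀R, hx₀u⟩ hπ
  rintro x ⟨⟨hxB, hxu⟩, hxA⟩ d hd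
  have hdecr := hu1 x (subset_closure ⟨hxB, hxA⟩) d hd
  have hpen : 0 ≤ g x * (1 - u x) := mul_nonneg (hgnn x) (sub_nonneg.2 hxu.le)
  exact ⟨hOmegaX (Or.inl ⟨x, hsub ⟨hxB, hxu⟩, d, hd, rfl⟩), by linarith⟩

theorem stmt3
    {n m nX : ℕ} (hnX : 0 < nX)
    (f : St n → St m → St n) (hfpoly : IsPolyMap2 f)
    (D : Set (St m)) (hD : IsCompact D)
    (hf0 : ∀ d ∈ D, f 0 d = 0)
    (hX : Fin nX → St n → ℝ) (hXpoly : ∀ j, IsPolyFun (hX j))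
    (hX0 : ∀ j, hX j 0 = 0) (hXpos : ∀ j, ∀ x : St n, x ≠ 0 → 0 < hX j x)
    (X : Set (St n)) (hXdef : X = {x | ∀ j, hX j x < 1})
    (hXbdd : Bornology.IsBounded X) (hXopen : IsOpen X)
    (g : St n → ℝ) (hgpoly : IsPolyFun g) (hgnn : ∀ x, 0 ≤ g x)
    (hgzero : ∀ x : St n, g x = 0 ↔ x = 0)
    (R : ℝ) (hR : 0 < R)
    (hOmegaX : {y | ∃ x₀ ∈ X, ∃ d ∈ D, y = f x₀ d} ∪ X ⊆ {x : St n | ‖x‖ ^ 2 ≤ R})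
    (hinf : St n → ℝ) (hinfpoly : IsPolyFun hinf)
    (Xinf : Set (St n)) (hXinfdef : Xinf = {x | hinf x < 1})
    (hXinfRoA : Xinf ⊆ RoA f D X) (hXinf0 : (0 : St n) ∈ interior Xinf)
    (u : St n → ℝ) (hucont : Continuous u)
    (hu1 : ∀ x ∈ closure ({x : St n | ‖x‖ ^ 2 ≤ R} \ Xinf), ∀ d ∈ D,
      0 ≤ u x - u (f x d) - g x * (1 - u x))
    (hu2 : ∀ x ∈ {x : St n | ‖x‖ ^ 2 ≤ R} \ X, 0 ≤ u x - 1)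
    (hu3 : ∀ x ∈ closure X, ∀ j, 0 ≤ u x - hX j x)
    :
    ∀ x₀ : St n, ‖x₀‖ ^ 2 ≤ R → u x₀ < 1 → ∀ π, IsPolicy D π →
      ∀ k, traj f x₀ π k ∈ X :=
  stmt3_general f D X g hgnn R hOmegaX Xinf hXinfRoA u hu1 hu2
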